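/- The language L_2lin1 = { a^{2n+1} b^{2n+1} : n ≥ 0 } over the alphabet {a,b} is accepted by a repetitive deterministic finite automaton with translucent words (RDFAwtw). -/

import Mathlib

/-! Repetitive (non)deterministic finite automata with translucent words. -/

/-- Behavior of the automaton at the end-of-tape marker: halt accepting,
halt rejecting, or (in the repetitive case) continue in one of a set of states. -/
inductive EndBehavior (Q : Type) : Type where
  | accept : EndBehavior Q
  | reject : EndBehavior Q
  | cont : Set Q → EndBehavior Q

/-- `InStar S w` means `w` belongs to the Kleene star `S*` of the set of words `S`. -/
def InStar {α : Type} (S : Set (List α)) (w : List α) : Prop :=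
  ∃ l : List (List α), (∀ u ∈ l, u ∈ S) ∧ l.flatten = w

/-- A (repetitive) nondeterministic finite automaton with translucent words,
with state set `Q` over the alphabet `α`.  `tl q` is the set `τ(q)` of
translucent words of the state `q`, `delta` is the transition function and
`endB q` is the behavior at the end-of-tape marker.  The fields `tl_fin`,
`code_ne`, `prefix_code` and `tl_head` express that each `τ(q)` is finite,
that `τ(q) ∪ Σ_q` is a prefix code (no empty word, and no member is a proper
prefix of another member), and that no word of `τ(q)` begins with a letter
readable in `q`. -/
structure RNFAwtw (α : Type) (Q : Type) : Type where
  init : Set Q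
  tl : Q → Set (List α)
  delta : Q → α → Set Q
  endB : Q → EndBehavior Q
  tl_fin : ∀ q, (tl q).Finite
  code_ne : ∀ q, [] ∉ tl q
  prefix_code : ∀ q,
    ∀ u ∈ tl q ∪ {w | ∃ a, (delta q a).Nonempty ∧ w = [a]},
    ∀ v ∈ tl q ∪ {w | ∃ a, (delta q a).Nonempty ∧ w = [a]},
      u <+: v → u = v
  tl_head : ∀ q, ∀ t ∈ tl q, ∀ a, (delta q a).Nonempty → ¬ [a] <+: t

/-- Configurations: a pair of a state and the remaining tape content, or one
of the two halting configurations. -/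
inductive Conf (α Q : Type) : Type where
  | state : Q → List α → Conf α Q
  | accept : Conf α Q
  | reject : Conf α Q

/-- The single-step computation relation of an RNFAwtw. -/
inductive RNFAwtw.Step {α Q : Type} (A : RNFAwtw α Q) :
    Conf α Q → Conf α Q → Prop where
  | read {q q' : Q} {a : α} {u v : List α} :
      InStar (A.tl q) u → q' ∈ A.delta q a →
      RNFAwtw.Step A (Conf.state q (u ++ a :: v)) (Conf.state q' (u ++ v))
  | stuck {q : Q} {a : α} {u v : List α} :
      InStar (A.tl q) u → A.delta q a = ∅ →
      (∀ t ∈ A.tl q, ¬ t <+: (a :: v)) →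
      RNFAwtw.Step A (Conf.state q (u ++ a :: v)) Conf.reject
  | haltAccept {q : Q} {w : List α} :
      InStar (A.tl q) w → A.endB q = EndBehavior.accept →
      RNFAwtw.Step A (Conf.state q w) Conf.accept
  | haltReject {q : Q} {w : List α} :
      InStar (A.tl q) w → A.endB q = EndBehavior.reject →
      RNFAwtw.Step A (Conf.state q w) Conf.reject
  | goOn {q q' : Q} {w : List α} {S : Set Q} :
      InStar (A.tl q) w → A.endB q = EndBehavior.cont S → q' ∈ S →
      RNFAwtw.Step A (Conf.state q w) (Conf.state q' w)

/-- `A` accepts the word `w`. -/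
def RNFAwtw.Accepts {α Q : Type} (A : RNFAwtw α Q) (w : List α) : Prop :=
  ∃ q0 ∈ A.init, Relation.ReflTransGen A.Step (Conf.state q0 w) Conf.accept

/-- The language accepted by `A`. -/
def RNFAwtw.lang {α Q : Type} (A : RNFAwtw α Q) : Set (List α) :=
  { w | A.Accepts w }

/-- `A` is deterministic: one initial state, at most one transition per
state/letter pair, and at the end-of-tape marker the continuation (if any)
is a single state. -/
def RNFAwtw.Deterministic {α Q : Type} (A : RNFAwtw α Q) : Prop :=
  (∃ q0, A.init = {q0}) ∧
  (∀ q a, (A.delta q a).Subsingleton) ∧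
  (∀ q S, A.endB q = EndBehavior.cont S → ∃ q', S = {q'})

/-- `A` is non-repetitive: at the end-of-tape marker it always halts. -/
def RNFAwtw.NonRepetitive {α Q : Type} (A : RNFAwtw α Q) : Prop :=
  ∀ q S, A.endB q ≠ EndBehavior.cont S

/-- `L` is accepted by some repetitive NFAwtw (with a finite state set). -/
def AcceptedByRNFAwtw {α : Type} (L : Set (List α)) : Prop :=
  ∃ (Q : Type) (_ : Finite Q) (A : RNFAwtw α Q), A.lang = L

/-- `L` is accepted by some repetitive DFAwtw. -/
def AcceptedByRDFAwtw {α : Type} (L : Set (List α)) : Prop :=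
  ∃ (Q : Type) (_ : Finite Q) (A : RNFAwtw α Q), A.Deterministic ∧ A.lang = L

/-- `L` is accepted by some (non-repetitive) NFAwtw. -/
def AcceptedByNFAwtw {α : Type} (L : Set (List α)) : Prop :=
  ∃ (Q : Type) (_ : Finite Q) (A : RNFAwtw α Q), A.NonRepetitive ∧ A.lang = L

/-- `L` is accepted by some (non-repetitive) DFAwtw. -/
def AcceptedByDFAwtw {α : Type} (L : Set (List α)) : Prop :=
  ∃ (Q : Type) (_ : Finite Q) (A : RNFAwtw α Q),
    A.NonRepetitive ∧ A.Deterministic ∧ A.lang = L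

/-- The two-letter alphabet `{a, b}`. -/
inductive Letter : Type where
  | a : Letter
  | b : Letter
deriving DecidableEq

instance : Fintype Letter :=
  ⟨{Letter.a, Letter.b}, fun x => by cases x <;> simp⟩

/-- `L_2lin1 = { a^{2n+1} b^{2n+1} : n ≥ 0 }`. -/
def L2lin1 : Set (List Letter) :=
  { w | ∃ n : ℕ,
      w = List.replicate (2 * n + 1) Letter.a ++ List.replicate (2 * n + 1) Letter.b }

/-!
`M` below works in rounds. In `c1` the whole tape has to pass the end-of-tape test for
`τ(c1)* = {aa, ab, bb}*`; then `m1` and `m2` each delete the first `b` not hidden behind a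
prefix in `{aa, ab}*`, that is the second `b` (in between, `t1` tests `{aa, abb, bb}*`), and
`p1`, `p2` delete two `a`s. So `a^(2n+3) b^(2n+3)` returns to `c1` as `a^(2n+1) b^(2n+1)`, and
`ab` is accepted via `m1 → f1 → f2 → f3`.

Soundness is an invariant propagated backwards along accepting runs. Its combinatorial core is
`insert_b_eq_ab`: if `u ∈ {aa, ab}*` is a prefix of `a^m b^l` and inserting a `b` after `u`
gives a word in `{aa, ab, bb, abb}*`, the result is `a^m b^(l+1)`; otherwise `u = a^(2i)` with
`2i < m`, and the factor `ba` at the even position `2i` admits no such factorization.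
-/

namespace InStar

variable {α : Type} {S : Set (List α)} {u v w : List α}

theorem nil (S : Set (List α)) : InStar S [] :=
  ⟨[], by simp, rfl⟩

theorem of_mem (h : w ∈ S) : InStar S w :=
  ⟨[w], by simpa using h, by simp⟩

theorem append (hu : InStar S u) (hv : InStar S v) : InStar S (u ++ v) := by
  obtain ⟨l₁, h₁, rfl⟩ := hu
  obtain ⟨l₂, h₂, rfl⟩ := hv
  exact ⟨l₁ ++ l₂, by simpa [or_imp, forall_and] using And.intro h₁ h₂, by simp⟩

theorem replicate_mul {x : α} {n : ℕ} (h : List.replicate n x ∈ S) (k : ℕ) :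
    InStar S (List.replicate (n * k) x) :=
  ⟨List.replicate k (List.replicate n x), by simpa [List.mem_replicate] using fun _ => h,
    by rw [List.flatten_replicate_replicate, mul_comm]⟩

theorem eq_nil_or_exists_append (h : InStar S w) :
    w = [] ∨ ∃ t ∈ S, ∃ w', InStar S w' ∧ w = t ++ w' := by
  obtain ⟨_ | ⟨t, l⟩, hl, rfl⟩ := h
  · exact Or.inl rfl
  · exact Or.inr ⟨t, hl t (by simp), l.flatten, ⟨l, fun u hu => hl u (by simp [hu]), rfl⟩, rfl⟩

@[elab_as_elim]
theorem induction_on {motive : (w : List α) → InStar S w → Prop} (h : InStar S w)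
    (nil : motive [] (nil S))
    (append : ∀ t (ht : t ∈ S) w (hw : InStar S w), motive w hw →
      motive (t ++ w) ((of_mem ht).append hw)) : motive w h := by
  obtain ⟨l, hl, rfl⟩ := h
  induction l with
  | nil => exact nil
  | cons t l ih =>
    have hl' : ∀ u ∈ l, u ∈ S := fun u hu => hl u (by simp [hu])
    exact append t (hl t (by simp)) _ ⟨l, hl', rfl⟩ (ih hl')

theorem eq_nil_of_empty (h : InStar S w) (hS : S = ∅) : w = [] := by
  subst hS
  rcases h.eq_nil_or_exists_append with h | ⟨_, ht, _⟩
  exacts [h, ht.elim]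

end InStar

theorem RNFAwtw.Step.read_head {α Q : Type} {A : RNFAwtw α Q} {q q' : Q} {x : α}
    {w : List α} (h : q' ∈ A.delta q x) : A.Step (.state q (x :: w)) (.state q' w) :=
  .read (u := []) (InStar.nil _) h

theorem Option.nonempty_setOf_eq_some_iff {β : Type} {o : Option β} :
    {y | o = some y}.Nonempty ↔ o.isSome := by
  cases o <;> simp

namespace L2lin1Automaton

open Letter

variable {S T : Set (List Letter)}

def ab (m l : ℕ) : List Letter :=
  List.replicate m a ++ List.replicate l b

@[simp] theorem ab_zero_left (l : ℕ) : ab 0 l = List.replicate l b := rfl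

@[simp] theorem ab_succ_left (m l : ℕ) : ab (m + 1) l = a :: ab m l := rfl

theorem not_instar_b_a (hS : S ⊆ {[a, a], [a, b], [b, b], [a, b, b]}) (x : List Letter) :
    ¬ InStar S (b :: a :: x) := by
  intro h
  rcases h.eq_nil_or_exists_append with h | ⟨t, ht, w', -, h⟩
  · simp at h
  · rcases hS ht with rfl | rfl | rfl | rfl <;> simp at h

theorem instar_of_instar_a_a (hS : S ⊆ {[a, a], [a, b], [b, b], [a, b, b]}) {x : List Letter}
    (h : InStar S (a :: a :: x)) : InStar S x := by
  rcases h.eq_nil_or_exists_append with h | ⟨t, ht, w', hw', h⟩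
  · simp at h
  · rcases hS ht with rfl | rfl | rfl | rfl <;> simp_all

theorem eq_nil_of_instar_of_append_eq_replicate_b (hT : T ⊆ {[a, a], [a, b]}) {u v : List Letter}
    {l : ℕ} (hu : InStar T u) (huv : u ++ v = List.replicate l b) : u = [] := by
  rcases hu.eq_nil_or_exists_append with h | ⟨t, ht, w', -, rfl⟩
  · exact h
  · cases l <;> rcases hT ht with rfl | rfl <;> simp [List.replicate_succ] at huv

theorem insert_b_eq_ab (hS : S ⊆ {[a, a], [a, b], [b, b], [a, b, b]})
    (hT : T ⊆ {[a, a], [a, b]}) {u v : List Letter} {m l : ℕ} (hu : InStar T u)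
    (huv : u ++ v = ab m l) (hw : InStar S (u ++ b :: v)) : u ++ b :: v = ab m (l + 1) := by
  induction hu using InStar.induction_on generalizing v m with
  | nil =>
    rcases m with _ | m
    · simp_all [List.replicate_succ]
    · obtain rfl : v = a :: ab m l := by simpa using huv
      exact absurd hw (not_instar_b_a hS _)
  | append t ht u' hu' ih =>
    rcases hT ht with rfl | rfl
    · rcases m with _ | _ | m
      · cases l <;> simp [List.replicate_succ] at huv
      · cases l <;> simp [List.replicate_succ] at huv
      · simp only [List.cons_append, List.nil_append, ab_succ_left, List.cons.injEq,
          true_and] at huv hw ⊢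
        exact ih huv (instar_of_instar_a_a hS hw)
    · rcases m with _ | _ | m <;> rcases l with _ | l <;>
        simp [List.replicate_succ] at huv ⊢
      obtain rfl := eq_nil_of_instar_of_append_eq_replicate_b hT hu' huv
      rw [List.nil_append] at huv ⊢
      rw [huv]

inductive St
  | c1 | m1 | t1 | m2 | p1 | p2 | f1 | f2 | f3
deriving DecidableEq

instance : Fintype St :=
  ⟨{.c1, .m1, .t1, .m2, .p1, .p2, .f1, .f2, .f3}, fun q => by cases q <;> simp⟩

open St

def tl : St → Finset (List Letter)
  | c1 => {[a, a], [a, b], [b, b]}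
  | m1 | m2 => {[a, a], [a, b]}
  | t1 => {[a, a], [a, b, b], [b, b]}
  | _ => ∅

def next : St → Letter → Option St
  | m1, b => some t1
  | m2, b => some p1
  | p1, a => some p2
  | p2, a => some c1
  | f1, a => some f2
  | f2, b => some f3
  | _, _ => none

def endB : St → EndBehavior St
  | c1 => .cont {m1}
  | m1 => .cont {f1}
  | t1 => .cont {m2}
  | f3 => .accept
  | _ => .reject

def readable (q : St) : Finset (List Letter) :=
  (Finset.univ.filter fun x => (next q x).isSome).image fun x => [x]

theorem coe_readable (q : St) :
    (readable q : Set (List Letter)) = {w | ∃ x, {q' | next q x = some q'}.Nonempty ∧ w = [x]} := by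
  ext w
  simp only [readable, Finset.coe_image, Finset.coe_filter, Set.mem_image, Set.mem_ofPred_eq,
    Finset.mem_univ, true_and, Option.nonempty_setOf_eq_some_iff]
  exact ⟨fun ⟨x, hx, h⟩ => ⟨x, hx, h.symm⟩, fun ⟨x, hx, h⟩ => ⟨x, hx, h.symm⟩⟩

def M : RNFAwtw Letter St where
  init := {c1}
  tl q := tl q
  delta q x := {q' | next q x = some q'}
  endB := endB
  tl_fin q := (tl q).finite_toSet
  code_ne := by simp only [Finset.mem_coe]; decide
  prefix_code := by
    intro q
    rw [← coe_readable, ← Finset.coe_union]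
    simp only [Finset.mem_coe]
    revert q
    decide
  tl_head := by
    simp only [Finset.mem_coe, Option.nonempty_setOf_eq_some_iff]
    decide

theorem M_deterministic : M.Deterministic := by
  refine ⟨⟨c1, rfl⟩, fun q x q₁ h₁ q₂ h₂ => Option.some_injective _ (h₁.symm.trans h₂), ?_⟩
  intro q S h
  cases q <;> cases h <;> exact ⟨_, rfl⟩

/-- From `m1` and `m2` the automaton also accepts words not of the form `a^m b^l`; the invariant
there is conditional on the end-of-tape test through which `c1` resp. `t1` enters them. -/
def Inv : Conf Letter St → Prop
  | .accept => True
  | .reject => False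
  | .state q w =>
    match q with
    | c1 => ∃ n, w = ab (2 * n + 1) (2 * n + 1)
    | m1 => InStar (M.tl c1) w → ∃ n, w = ab (2 * n + 1) (2 * n + 1)
    | t1 => ∃ n, w = ab (2 * n + 1) (2 * n)
    | m2 => InStar (M.tl t1) w → ∃ n, w = ab (2 * n + 1) (2 * n)
    | p1 => ∃ n, w = a :: a :: ab (2 * n + 1) (2 * n + 1)
    | p2 => ∃ n, w = a :: ab (2 * n + 1) (2 * n + 1)
    | f1 => w = [a, b]
    | f2 => w = [b]
    | f3 => w = []

theorem tl_subset (q : St) : M.tl q ⊆ {[a, a], [a, b], [b, b], [a, b, b]} := by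
  have h : tl q ⊆ {[a, a], [a, b], [b, b], [a, b, b]} := by revert q; decide
  show (tl q : Set (List Letter)) ⊆ _
  simpa using Finset.coe_subset.2 h

theorem inv_of_step {c c' : Conf Letter St} (h : M.Step c c') (h' : Inv c') : Inv c := by
  cases h with
  | @read q q' x u v hu hq =>
    change next q x = some q' at hq
    cases q <;> cases x <;> simp only [next, reduceCtorEq, Option.some.injEq] at hq <;> subst hq
    case m1.b =>
      exact fun hw => h'.imp fun n hn => insert_b_eq_ab (tl_subset c1) (by simp [M, tl]) hu hn hw
    case m2.b =>
      obtain ⟨n, hn⟩ := h'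
      exact fun hw => ⟨n + 1, insert_b_eq_ab (tl_subset t1) (by simp [M, tl]) hu hn hw⟩
    all_goals obtain rfl : u = [] := hu.eq_nil_of_empty Finset.coe_empty
    case p1.a => exact h'.imp fun n => congrArg (a :: ·)
    case p2.a => exact h'.imp fun n => congrArg (a :: ·)
    case f1.a => exact congrArg (a :: ·) h'
    case f2.b => exact congrArg (b :: ·) h'
  | stuck => exact h'.elim
  | haltReject => exact h'.elim
  | @haltAccept q w hw he =>
    cases q <;> simp only [M, endB, reduceCtorEq] at he
    exact hw.eq_nil_of_empty Finset.coe_empty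
  | @goOn q q' w S hw he hq =>
    cases q <;> simp only [M, endB, reduceCtorEq, EndBehavior.cont.injEq] at he <;> subst he <;>
      subst hq
    · exact h' hw
    · exact fun _ => ⟨0, h'⟩
    · exact h' hw

theorem inv_of_reflTransGen_accept {c : Conf Letter St}
    (h : Relation.ReflTransGen M.Step c .accept) : Inv c := by
  induction h using Relation.ReflTransGen.head_induction_on with
  | refl => trivial
  | head hstep _ ih => exact inv_of_step hstep ih

theorem ab_add_one_add_one (m l : ℕ) :
    ab (m + 1) (l + 1) = (List.replicate m a ++ [a, b]) ++ List.replicate l b := by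
  simp [ab, List.replicate_succ' (a := a), List.replicate_succ (a := b)]

theorem instar_tl_c1_ab (n : ℕ) : InStar (M.tl c1) (ab (2 * n + 1) (2 * n + 1)) := by
  rw [ab_add_one_add_one]
  exact ((InStar.replicate_mul (n := 2) (by simp [M, tl]) n).append
    (.of_mem (by simp [M, tl]))).append (InStar.replicate_mul (n := 2) (by simp [M, tl]) n)

theorem instar_tl_t1_ab (n : ℕ) : InStar (M.tl t1) (ab (2 * n + 3) (2 * n + 2)) := by
  have h := (InStar.replicate_mul (n := 2) (by simp [M, tl] : [a, a] ∈ M.tl t1) (n + 1)).append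
    ((InStar.of_mem (by simp [M, tl] : [a, b, b] ∈ M.tl t1)).append
      (InStar.replicate_mul (n := 2) (by simp [M, tl] : [b, b] ∈ M.tl t1) n))
  convert h using 1
  simp [ab, List.replicate_succ' (a := a), List.replicate_succ (a := b), mul_add]

theorem step_read_b {q q' : St} (haa : [a, a] ∈ M.tl q) (hab : [a, b] ∈ M.tl q)
    (hq : q' ∈ M.delta q b) (i l : ℕ) :
    M.Step (.state q (ab (2 * i + 1) (l + 2))) (.state q' (ab (2 * i + 1) (l + 1))) := by
  rw [ab_add_one_add_one _ (l + 1), ab_add_one_add_one]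
  exact .read ((InStar.replicate_mul (n := 2) haa i).append (.of_mem hab)) hq

theorem reflTransGen_c1_c1 (n : ℕ) :
    Relation.ReflTransGen M.Step (.state c1 (ab (2 * n + 3) (2 * n + 3)))
      (.state c1 (ab (2 * n + 1) (2 * n + 1))) :=
  .head (.goOn (instar_tl_c1_ab (n + 1)) rfl rfl) <|
  .head (step_read_b (by simp [M, tl]) (by simp [M, tl]) rfl (n + 1) (2 * n + 1)) <|
  .head (.goOn (instar_tl_t1_ab n) rfl rfl) <|
  .head (step_read_b (by simp [M, tl]) (by simp [M, tl]) rfl (n + 1) (2 * n)) <|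
  .head (.read_head (q := p1) rfl) <|
  .single (.read_head rfl)

theorem reflTransGen_c1_accept (n : ℕ) :
    Relation.ReflTransGen M.Step (.state c1 (ab (2 * n + 1) (2 * n + 1))) .accept := by
  induction n with
  | zero =>
    exact .head (.goOn (instar_tl_c1_ab 0) rfl rfl) <|
      .head (.goOn (.of_mem (by simp [M, tl])) rfl rfl) <|
      .head (.read_head (q := f1) rfl) <| .head (.read_head (q := f2) rfl) <|
      .single (.haltAccept (.nil _) rfl)
  | succ n ih => exact (reflTransGen_c1_c1 n).trans ih

theorem M_lang : M.lang = L2lin1 := by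
  ext w
  constructor
  · rintro ⟨_, rfl, h⟩
    exact inv_of_reflTransGen_accept h
  · rintro ⟨n, rfl⟩
    exact ⟨c1, rfl, reflTransGen_c1_accept n⟩

end L2lin1Automaton

/-- The language `L_2lin1 = { a^{2n+1} b^{2n+1} : n ≥ 0 }` is accepted by a
repetitive deterministic finite automaton with translucent words. -/
theorem L2lin1_accepted_by_RDFAwtw : AcceptedByRDFAwtw L2lin1 :=
  ⟨_, inferInstance, _, L2lin1Automaton.M_deterministic, L2lin1Automaton.M_lang⟩
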